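/- Assume the partition satisfies Q_j ≍ η^{-1}B^j and λ_{jq} ≍ ηB^{-j} for j ≥ 0. Then for every p ≥ 1 there exist constants c̃_p, C̃_p > 0 (depending on p, s, B) such that for all j ≥ 0 and all q = 1, …, Q_j, c̃_p B^{j(p/2−1)} η^{p/2} ≤ ‖ψ_{jq;s}‖^p_{L^p(S¹)} ≤ C̃_p η^{p/2} B^{j(p/2−1)}. -/

import Mathlib

noncomputable section
open MeasureTheory Real

instance : Fact (0 < 2 * Real.pi) := ⟨by positivity⟩

abbrev S1 := AddCircle (2 * Real.pi)

/-- The normalized measure `ρ(dθ) = dθ/(2π)` on the circle. -/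
def rho : Measure S1 := AddCircle.haarAddCircle

/-- The weight function `w_s(x) = x^s e^{-x}`. -/
def wgt (s : ℕ) (x : ℝ) : ℝ := x ^ s * Real.exp (-x)

/-- The Mexican needlet `ψ_{jq;s}`. -/
def needlet (B : ℝ) (s : ℕ) (j : ℤ) (lam : ℝ) (xc : S1) (θ : S1) : ℂ :=
  (Real.sqrt lam : ℂ) * ∑' k : ℤ, ((wgt s ((B ^ (-j) * (k : ℝ)) ^ 2) : ℝ) : ℂ) * fourier k (θ - xc)


/-!
Write `ε = B^{-j}` and `aₖ = f(εk)` with `f(t) = w_s(t²) = t^{2s} e^{-t²}`. After translating by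
`x_{jq}`, `ψ_{jq;s}` is `√λ_{jq}` times the kernel `K_ε(x) = ∑ₖ aₖ e^{ikx}`, so
`‖ψ_{jq;s}‖_p^p = λ_{jq}^{p/2} (2π)⁻¹ ∫_{-π}^{π} |K_ε|^p`, and it suffices to show that this
integral is comparable to `ε^{1-p}`.

Since `f`, `t² f` and `f''` are all `O(e^{-|t|})`, sums of `aₖ` against such weights behave like
Riemann sums: `∑ aₖ ≍ 1/ε` and `∑ aₖ k² ≲ ε⁻³`. Hence `|K_ε| ≲ 1/ε` everywhere, and
`cos(kx) ≥ 1 - (kx)²/2` gives `|K_ε(x)| ≳ 1/ε` for `|x| ≤ δε`. Summing by parts twice,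
`(2 - 2 cos x) K_ε(x) = ∑ₖ (2aₖ - aₖ₋₁ - aₖ₊₁) e^{ikx}` with second differences `≲ ε² e^{-ε|k|}`,
so `|K_ε(x)| ≲ ε/x²` on `[-π, π]`. Together `|K_ε(x)| ≲ ε/(ε² + x²)`, whose `p`-th power
integrates to `≲ ε^{1-p}` by scaling `x = εu`, while the interval `|x| ≤ δε` alone contributes
`≳ ε^{1-p}`.
-/

open Polynomial
open scoped Nat Complex
open Set Filter
open Complex (I)

lemma hasSum_exp_neg_mul_abs {c : ℝ} (hc : 0 < c) :
    HasSum (fun k : ℤ => rexp (-(c * |(k : ℝ)|))) ((1 + rexp (-c)) / (1 - rexp (-c))) := by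
  have hr : rexp (-c) < 1 := exp_lt_one_iff.2 (neg_lt_zero.2 hc)
  have hgeom := hasSum_geometric_of_lt_one (exp_nonneg (-c)) hr
  have hpow (n : ℕ) : rexp (-(c * n)) = rexp (-c) ^ n := by
    rw [← exp_nat_mul]; ring_nf
  have hnonneg : HasSum (fun n : ℕ => rexp (-(c * |((n : ℤ) : ℝ)|))) (1 - rexp (-c))⁻¹ := by
    refine hgeom.congr_fun fun n => ?_
    rw [← hpow, Int.cast_natCast, abs_of_nonneg (Nat.cast_nonneg n)]
  have hneg : HasSum (fun n : ℕ => rexp (-(c * |((-(n + 1) : ℤ) : ℝ)|)))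
      (rexp (-c) * (1 - rexp (-c))⁻¹) := by
    refine (hgeom.mul_left (rexp (-c))).congr_fun fun n => ?_
    rw [← pow_succ', ← hpow]
    push_cast
    rw [abs_neg, abs_of_nonneg (by positivity)]
  have hsum := HasSum.of_nat_of_neg_add_one (f := fun k : ℤ => rexp (-(c * |(k : ℝ)|))) hnonneg hneg
  rwa [← one_add_mul, ← div_eq_mul_inv] at hsum

lemma tsum_exp_neg_mul_abs_le {c : ℝ} (hc : 0 < c) (hc1 : c ≤ 1) :
    ∑' k : ℤ, rexp (-(c * |(k : ℝ)|)) ≤ 4 / c := by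
  rw [(hasSum_exp_neg_mul_abs hc).tsum_eq]
  have hgap : (c + 1) * rexp (-c) ≤ 1 := by
    calc (c + 1) * rexp (-c) ≤ rexp c * rexp (-c) :=
          mul_le_mul_of_nonneg_right (by linarith [add_one_le_exp c]) (exp_nonneg _)
      _ = 1 := by rw [← exp_add, add_neg_cancel, exp_zero]
  rw [div_le_div_iff₀ (by nlinarith [exp_pos (-c)]) hc]
  nlinarith [exp_pos (-c)]

lemma summable_abs_of_abs_le_exp {g : ℤ → ℝ} {C ε : ℝ} (hε : 0 < ε)
    (hg : ∀ k, |g k| ≤ C * rexp (-(ε * |(k : ℝ)|))) : Summable fun k => |g k| :=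
  .of_nonneg_of_le (fun _ => abs_nonneg _) hg ((hasSum_exp_neg_mul_abs hε).summable.mul_left C)

lemma tsum_abs_le_of_abs_le_exp {g : ℤ → ℝ} {C ε : ℝ} (hε : 0 < ε) (hε1 : ε ≤ 1)
    (hg : ∀ k, |g k| ≤ C * rexp (-(ε * |(k : ℝ)|))) : ∑' k, |g k| ≤ 4 * C / ε := by
  have hC : 0 ≤ C := nonneg_of_mul_nonneg_left ((abs_nonneg _).trans (hg 0)) (exp_pos _)
  calc ∑' k, |g k| ≤ ∑' k : ℤ, C * rexp (-(ε * |(k : ℝ)|)) :=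
        (summable_abs_of_abs_le_exp hε hg).tsum_le_tsum hg
          ((hasSum_exp_neg_mul_abs hε).summable.mul_left C)
    _ = C * ∑' k : ℤ, rexp (-(ε * |(k : ℝ)|)) := tsum_mul_left
    _ ≤ C * (4 / ε) := by gcongr; exact tsum_exp_neg_mul_abs_le hε hε1
    _ = 4 * C / ε := by ring

lemma abs_pow_mul_exp_neg_sq_le (n : ℕ) (t : ℝ) :
    |t| ^ n * rexp (-t ^ 2) ≤ n ! * rexp 1 * rexp (-|t|) := by
  have hpow : |t| ^ n ≤ n ! * rexp |t| := by
    have := pow_div_factorial_le_exp _ (abs_nonneg t) n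
    rwa [div_le_iff₀ (by positivity), mul_comm] at this
  have hexp : rexp |t| * rexp (-t ^ 2) ≤ rexp 1 * rexp (-|t|) := by
    rw [← exp_add, ← exp_add, exp_le_exp, ← sq_abs t]
    nlinarith [sq_nonneg (|t| - 1)]
  calc |t| ^ n * rexp (-t ^ 2) ≤ n ! * rexp |t| * rexp (-t ^ 2) := by gcongr
    _ ≤ n ! * (rexp 1 * rexp (-|t|)) := by rw [mul_assoc]; gcongr
    _ = n ! * rexp 1 * rexp (-|t|) := by ring

lemma eventually_abs_eval_mul_exp_neg_sq_le (P : ℝ[X]) :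
    ∀ᶠ C in atTop, ∀ t, |P.eval t * rexp (-t ^ 2)| ≤ C * rexp (-|t|) := by
  refine eventually_atTop.2
    ⟨∑ i ∈ Finset.range (P.natDegree + 1), |P.coeff i| * (i ! * rexp 1), fun C hC t => ?_⟩
  refine le_trans ?_ (mul_le_mul_of_nonneg_right hC (exp_nonneg _))
  rw [Finset.sum_mul, abs_mul, abs_of_pos (exp_pos _), eval_eq_sum_range]
  refine (mul_le_mul_of_nonneg_right (Finset.abs_sum_le_sum_abs _ _) (exp_nonneg _)).trans ?_
  rw [Finset.sum_mul]
  refine Finset.sum_le_sum fun i _ => ?_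
  rw [abs_mul, abs_pow, mul_assoc, mul_assoc]
  exact mul_le_mul_of_nonneg_left (abs_pow_mul_exp_neg_sq_le i t) (abs_nonneg _)

lemma hasDerivAt_eval_mul_exp_neg_sq (P : ℝ[X]) (t : ℝ) :
    HasDerivAt (fun t => P.eval t * rexp (-t ^ 2))
      ((derivative P - 2 * X * P).eval t * rexp (-t ^ 2)) t := by
  have hgauss : HasDerivAt (fun t : ℝ => rexp (-t ^ 2)) (rexp (-t ^ 2) * -(2 * t)) t := by
    simpa using ((hasDerivAt_pow 2 t).neg).exp
  refine ((P.hasDerivAt t).fun_mul hgauss).congr_deriv ?_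
  simp only [eval_sub, eval_mul, eval_X, eval_ofNat]
  ring

lemma abs_add_sub_two_mul_add_le {f f' f'' : ℝ → ℝ} (hf : ∀ t, HasDerivAt f (f' t) t)
    (hf' : ∀ t, HasDerivAt f' (f'' t) t) {x h M : ℝ} (hh : 0 ≤ h)
    (hM : ∀ y ∈ Icc (x - h) (x + h), |f'' y| ≤ M) :
    |f (x + h) - 2 * f x + f (x - h)| ≤ 2 * M * h ^ 2 := by
  have hM0 : 0 ≤ M := (abs_nonneg _).trans (hM x ⟨by linarith, by linarith⟩)
  set g : ℝ → ℝ := fun u => f (x + u) + f (x - u)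
  have hg (u : ℝ) : HasDerivAt g (f' (x + u) - f' (x - u)) u := by
    have := ((hf (x + u)).comp_const_add x u).fun_add ((hf (x - u)).comp_const_sub x u)
    exact this.congr_deriv (by ring)
  have hg' : ∀ u ∈ Icc 0 h, ‖f' (x + u) - f' (x - u)‖ ≤ M * (2 * h) := by
    rintro u ⟨hu0, huh⟩
    have hmvt := (convex_Icc (x - h) (x + h)).norm_image_sub_le_of_norm_hasDerivWithin_le
      (fun y _ => (hf' y).hasDerivWithinAt) (fun y hy => (hM y hy : ‖f'' y‖ ≤ M))
      (⟨by linarith, by linarith⟩ : x - u ∈ Icc (x - h) (x + h))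
      (⟨by linarith, by linarith⟩ : x + u ∈ Icc (x - h) (x + h))
    refine hmvt.trans (mul_le_mul_of_nonneg_left ?_ hM0)
    rw [Real.norm_eq_abs, abs_le]
    constructor <;> linarith
  have hmvt := (convex_Icc 0 h).norm_image_sub_le_of_norm_hasDerivWithin_le
    (fun u _ => (hg u).hasDerivWithinAt) hg' (left_mem_Icc.2 hh) (right_mem_Icc.2 hh)
  have hgh : g h - g 0 = f (x + h) - 2 * f x + f (x - h) := by
    simp only [g, add_zero, sub_zero]; ring
  rw [hgh, Real.norm_eq_abs, Real.norm_eq_abs, sub_zero, abs_of_nonneg hh] at hmvt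
  linarith

def trigSeries (a : ℤ → ℝ) (x : ℝ) : ℂ :=
  ∑' k : ℤ, (a k : ℂ) * cexp (↑(k * x) * I)

section TrigSeries

variable {a : ℤ → ℝ}

lemma norm_trigSeries_term (a : ℤ → ℝ) (x : ℝ) (k : ℤ) :
    ‖(a k : ℂ) * cexp (↑(k * x) * I)‖ = |a k| := by
  rw [norm_mul, Complex.norm_exp_ofReal_mul_I, mul_one, Complex.norm_real, Real.norm_eq_abs]

lemma hasSum_trigSeries (ha : Summable fun k => |a k|) (x : ℝ) :
    HasSum (fun k : ℤ => (a k : ℂ) * cexp (↑(k * x) * I)) (trigSeries a x) :=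
  (Summable.of_norm (by simpa only [norm_trigSeries_term] using ha)).hasSum

lemma norm_trigSeries_le (ha : Summable fun k => |a k|) (x : ℝ) :
    ‖trigSeries a x‖ ≤ ∑' k, |a k| := by
  refine (norm_tsum_le_tsum_norm ?_).trans_eq ?_ <;> simp only [norm_trigSeries_term]
  exact ha

lemma continuous_trigSeries (ha : Summable fun k => |a k|) : Continuous (trigSeries a) :=
  continuous_tsum (fun k => by fun_prop) ha fun k x => (norm_trigSeries_term a x k).le

lemma exp_mul_trigSeries (n : ℤ) (x : ℝ) :
    cexp (↑(n * x) * I) * trigSeries a x = trigSeries (fun k => a (k - n)) x := by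
  rw [trigSeries, ← tsum_mul_left, trigSeries, ← (Equiv.subRight n).tsum_eq]
  congr 1 with k
  simp only [Equiv.subRight_apply]
  rw [mul_left_comm, ← Complex.exp_add]
  congr 2
  push_cast
  ring

lemma two_sub_two_cos_mul_trigSeries (ha : Summable fun k => |a k|) (x : ℝ) :
    ((2 - 2 * Real.cos x : ℝ) : ℂ) * trigSeries a x =
      trigSeries (fun k => 2 * a k - a (k - 1) - a (k + 1)) x := by
  have hshift (n : ℤ) := hasSum_trigSeries (a := fun k => a (k - n))
    ((Equiv.subRight n).summable_iff.2 ha) x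
  have hsum : HasSum
      (fun k : ℤ => ((2 * a k - a (k - 1) - a (k + 1) : ℝ) : ℂ) * cexp (↑(k * x) * I))
      (2 * trigSeries a x - trigSeries (fun k => a (k - 1)) x
        - trigSeries (fun k => a (k - -1)) x) := by
    refine ((((hasSum_trigSeries ha x).mul_left 2).sub (hshift 1)).sub (hshift (-1))).congr_fun
      fun k => ?_
    push_cast
    rw [sub_neg_eq_add]
    ring
  refine Eq.trans ?_ hsum.tsum_eq.symm
  rw [← exp_mul_trigSeries, ← exp_mul_trigSeries, Complex.ofReal_sub, Complex.ofReal_mul,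
    Complex.ofReal_cos, Complex.cos]
  push_cast
  ring_nf

lemma tsum_sub_mul_tsum_le_norm_trigSeries (ha0 : ∀ k, 0 ≤ a k) (ha : Summable a)
    (ha2 : Summable fun k : ℤ => a k * (k : ℝ) ^ 2) (x : ℝ) :
    ∑' k, a k - x ^ 2 / 2 * ∑' k : ℤ, a k * (k : ℝ) ^ 2 ≤ ‖trigSeries a x‖ := by
  have hcos : Summable fun k : ℤ => a k * Real.cos (k * x) := by
    refine ha.of_norm_bounded fun k => ?_
    rw [Real.norm_eq_abs, abs_mul, abs_of_nonneg (ha0 k)]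
    exact mul_le_of_le_one_right (ha0 k) (abs_cos_le_one _)
  have hre : (trigSeries a x).re = ∑' k : ℤ, a k * Real.cos (k * x) := by
    rw [trigSeries, Complex.re_tsum (hasSum_trigSeries ha.abs x).summable]
    congr 1 with k
    rw [Complex.re_ofReal_mul, Complex.exp_ofReal_mul_I_re]
  calc ∑' k, a k - x ^ 2 / 2 * ∑' k : ℤ, a k * (k : ℝ) ^ 2
      = ∑' k : ℤ, (a k - x ^ 2 / 2 * (a k * (k : ℝ) ^ 2)) := by
        rw [ha.tsum_sub (ha2.mul_left _), tsum_mul_left]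
    _ ≤ ∑' k : ℤ, a k * Real.cos (k * x) := by
        refine (ha.sub (ha2.mul_left _)).tsum_le_tsum (fun k => ?_) hcos
        have := mul_le_mul_of_nonneg_left (one_sub_sq_div_two_le_cos (x := k * x)) (ha0 k)
        linarith
    _ = (trigSeries a x).re := hre.symm
    _ ≤ ‖trigSeries a x‖ := Complex.re_le_norm _

end TrigSeries

section Sampled

variable {f : ℝ → ℝ} {C ε : ℝ}

lemma abs_comp_mul_le_exp (hε : 0 < ε) (hf : ∀ t, |f t| ≤ C * rexp (-|t|)) (k : ℤ) :
    |f (ε * k)| ≤ C * rexp (-(ε * |(k : ℝ)|)) := by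
  simpa only [abs_mul, abs_of_pos hε] using hf (ε * k)

lemma norm_trigSeries_comp_mul_le (hε : 0 < ε) (hε1 : ε ≤ 1)
    (hf : ∀ t, |f t| ≤ C * rexp (-|t|)) (x : ℝ) :
    ‖trigSeries (fun k => f (ε * k)) x‖ ≤ 4 * C / ε :=
  (norm_trigSeries_le (summable_abs_of_abs_le_exp hε (abs_comp_mul_le_exp hε hf)) x).trans
    (tsum_abs_le_of_abs_le_exp hε hε1 (abs_comp_mul_le_exp hε hf))

lemma abs_second_diff_comp_mul_le {f' f'' : ℝ → ℝ} (hf : ∀ t, HasDerivAt f (f' t) t)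
    (hf' : ∀ t, HasDerivAt f' (f'' t) t) (hf'' : ∀ t, |f'' t| ≤ C * rexp (-|t|))
    (hε : 0 < ε) (hε1 : ε ≤ 1) (k : ℤ) :
    |2 * f (ε * k) - f (ε * ↑(k - 1)) - f (ε * ↑(k + 1))| ≤
      2 * (C * rexp 1) * ε ^ 2 * rexp (-(ε * |(k : ℝ)|)) := by
  have hM : ∀ y ∈ Icc (ε * k - ε) (ε * k + ε), |f'' y| ≤ C * rexp 1 * rexp (-(ε * |(k : ℝ)|)) := by
    rintro y ⟨hy₁, hy₂⟩
    have hC : 0 ≤ C := nonneg_of_mul_nonneg_left ((abs_nonneg _).trans (hf'' 0)) (exp_pos _)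
    refine (hf'' y).trans ?_
    rw [mul_assoc, ← exp_add]
    gcongr
    have hdist : |ε * k - y| ≤ ε := abs_sub_le_iff.2 ⟨by linarith, by linarith⟩
    have := abs_sub_abs_le_abs_sub (ε * k) y
    rw [abs_mul, abs_of_pos hε] at this
    linarith
  have hΔ : 2 * f (ε * k) - f (ε * ↑(k - 1)) - f (ε * ↑(k + 1)) =
      -(f (ε * k + ε) - 2 * f (ε * k) + f (ε * k - ε)) := by
    push_cast
    rw [mul_sub, mul_add, mul_one]
    ring
  rw [hΔ, abs_neg]
  exact (abs_add_sub_two_mul_add_le hf hf' hε.le hM).trans_eq (by ring)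

lemma sq_mul_norm_trigSeries_comp_mul_le {f' f'' : ℝ → ℝ} (hf : ∀ t, |f t| ≤ C * rexp (-|t|))
    (hf' : ∀ t, HasDerivAt f (f' t) t) (hf'' : ∀ t, HasDerivAt f' (f'' t) t)
    (hf''C : ∀ t, |f'' t| ≤ C * rexp (-|t|)) (hε : 0 < ε) (hε1 : ε ≤ 1) {x : ℝ} (hx : |x| ≤ π) :
    x ^ 2 * ‖trigSeries (fun k => f (ε * k)) x‖ ≤ 2 * π ^ 2 * rexp 1 * C * ε := by
  have hΔ := abs_second_diff_comp_mul_le hf' hf'' hf''C hε hε1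
  have hcos : 4 / π ^ 2 * x ^ 2 ≤ 2 - 2 * Real.cos x := by
    have := cos_le_one_sub_mul_cos_sq hx
    have : 4 / π ^ 2 * x ^ 2 = 2 * (2 / π ^ 2 * x ^ 2) := by ring
    linarith
  have hdecay :
      (2 - 2 * Real.cos x) * ‖trigSeries (fun k => f (ε * k)) x‖ ≤ 8 * rexp 1 * C * ε := by
    have h := congrArg norm (two_sub_two_cos_mul_trigSeries
      (summable_abs_of_abs_le_exp hε (abs_comp_mul_le_exp hε hf)) x)
    rw [norm_mul, Complex.norm_real, Real.norm_of_nonneg (by linarith [cos_le_one x])] at h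
    rw [h]
    refine (norm_trigSeries_le (summable_abs_of_abs_le_exp hε hΔ) x).trans ?_
    refine (tsum_abs_le_of_abs_le_exp hε hε1 hΔ).trans_eq ?_
    field_simp
    ring
  calc x ^ 2 * ‖trigSeries (fun k => f (ε * k)) x‖
      = π ^ 2 / 4 * (4 / π ^ 2 * x ^ 2 * ‖trigSeries (fun k => f (ε * k)) x‖) := by
        field_simp
    _ ≤ π ^ 2 / 4 * ((2 - 2 * Real.cos x) * ‖trigSeries (fun k => f (ε * k)) x‖) := by gcongr
    _ ≤ π ^ 2 / 4 * (8 * rexp 1 * C * ε) := by gcongr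
    _ = 2 * π ^ 2 * rexp 1 * C * ε := by ring

lemma norm_trigSeries_comp_mul_mul_le {f' f'' : ℝ → ℝ} (hf : ∀ t, |f t| ≤ C * rexp (-|t|))
    (hf' : ∀ t, HasDerivAt f (f' t) t) (hf'' : ∀ t, HasDerivAt f' (f'' t) t)
    (hf''C : ∀ t, |f'' t| ≤ C * rexp (-|t|)) (hε : 0 < ε) (hε1 : ε ≤ 1) {x : ℝ} (hx : |x| ≤ π) :
    ‖trigSeries (fun k => f (ε * k)) x‖ * (ε ^ 2 + x ^ 2) ≤ (4 + 2 * π ^ 2 * rexp 1) * C * ε := by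
  have hsup := norm_trigSeries_comp_mul_le hε hε1 hf x
  have hdecay := sq_mul_norm_trigSeries_comp_mul_le hf hf' hf'' hf''C hε hε1 hx
  have : ‖trigSeries (fun k => f (ε * k)) x‖ * ε ^ 2 ≤ 4 * C * ε := by
    rw [le_div_iff₀ hε] at hsup
    nlinarith
  nlinarith

lemma div_le_tsum_comp_mul {c₀ : ℝ} (hε : 0 < ε) (hε1 : ε ≤ 1) (hf0 : ∀ t, 0 ≤ f t)
    (hsum : Summable fun k : ℤ => f (ε * k)) (hc₀ : 0 ≤ c₀) (hlow : ∀ t ∈ Icc 1 3, c₀ ≤ f t) :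
    c₀ / ε ≤ ∑' k : ℤ, f (ε * k) := by
  -- the `⌊1/ε⌋ + 1 > 1/ε` integers from `⌈1/ε⌉` on all land in `[1, 3]` after scaling by `ε`
  set n := ⌈ε⁻¹⌉₊
  set m := ⌊ε⁻¹⌋₊
  have hn : ε⁻¹ ≤ n := Nat.le_ceil _
  have hn' : (n : ℝ) < ε⁻¹ + 1 := Nat.ceil_lt_add_one (by positivity)
  have hm : (m : ℝ) ≤ ε⁻¹ := Nat.floor_le (by positivity)
  have hm' : ε⁻¹ < m + 1 := Nat.lt_floor_add_one _
  have hεinv : ε * ε⁻¹ = 1 := mul_inv_cancel₀ hε.ne'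
  have hmem : ∀ k ∈ Finset.Icc (n : ℤ) (n + m), c₀ ≤ f (ε * k) := by
    intro k hk
    rw [Finset.mem_Icc] at hk
    have hk₁ : (n : ℝ) ≤ k := by exact_mod_cast hk.1
    have hk₂ : (k : ℝ) ≤ n + m := by exact_mod_cast hk.2
    refine hlow _ ⟨?_, ?_⟩ <;> nlinarith
  have hcard : ((Finset.Icc (n : ℤ) (n + m)).card : ℝ) = m + 1 := by
    rw [Int.card_Icc, show (n : ℤ) + m + 1 - n = ((m + 1 : ℕ) : ℤ) by push_cast; ring,
      Int.toNat_natCast, Nat.cast_succ]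
  calc c₀ / ε = ε⁻¹ * c₀ := by ring
    _ ≤ (Finset.Icc (n : ℤ) (n + m)).card * c₀ := by rw [hcard]; gcongr
    _ = ∑ k ∈ Finset.Icc (n : ℤ) (n + m), c₀ := by rw [Finset.sum_const, nsmul_eq_mul]
    _ ≤ ∑ k ∈ Finset.Icc (n : ℤ) (n + m), f (ε * k) := Finset.sum_le_sum hmem
    _ ≤ ∑' k : ℤ, f (ε * k) := hsum.sum_le_tsum _ fun k _ => hf0 _

lemma le_norm_trigSeries_comp_mul {c₀ δ : ℝ} (hf0 : ∀ t, 0 ≤ f t)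
    (hf : ∀ t, |f t| ≤ C * rexp (-|t|)) (hf2 : ∀ t, |t ^ 2 * f t| ≤ C * rexp (-|t|))
    (hc₀ : 0 ≤ c₀) (hlow : ∀ t ∈ Icc 1 3, c₀ ≤ f t) (hδ : 4 * C * δ ^ 2 ≤ c₀)
    (hε : 0 < ε) (hε1 : ε ≤ 1) {x : ℝ} (hx : |x| ≤ δ * ε) :
    c₀ / (2 * ε) ≤ ‖trigSeries (fun k => f (ε * k)) x‖ := by
  have hsum := summable_abs_of_abs_le_exp hε (abs_comp_mul_le_exp hε hf)
  have hf0' (k : ℤ) : |f (ε * k)| = f (ε * k) := abs_of_nonneg (hf0 _)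
  simp only [hf0'] at hsum
  -- `aₖ k² = (εk)² f(εk) / ε²`
  have hsq (k : ℤ) : |f (ε * k) * (k : ℝ) ^ 2| ≤ C / ε ^ 2 * rexp (-(ε * |(k : ℝ)|)) := by
    have := abs_comp_mul_le_exp hε hf2 k
    rw [mul_pow, abs_mul, abs_mul, abs_of_pos (pow_pos hε 2)] at this
    rw [abs_mul, div_mul_eq_mul_div, le_div_iff₀ (pow_pos hε 2)]
    linarith
  have hsq_sum := summable_abs_of_abs_le_exp hε hsq
  have hsq_tsum := tsum_abs_le_of_abs_le_exp hε hε1 hsq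
  have hf0'' (k : ℤ) : |f (ε * k) * (k : ℝ) ^ 2| = f (ε * k) * (k : ℝ) ^ 2 :=
    abs_of_nonneg (mul_nonneg (hf0 _) (sq_nonneg _))
  simp only [hf0''] at hsq_sum hsq_tsum
  have hmain := tsum_sub_mul_tsum_le_norm_trigSeries (fun k => hf0 _) hsum hsq_sum x
  have hbulk := div_le_tsum_comp_mul hε hε1 hf0 hsum hc₀ hlow
  have hx2 : x ^ 2 ≤ δ ^ 2 * ε ^ 2 := by
    rw [← mul_pow, ← sq_abs]
    exact pow_le_pow_left₀ (abs_nonneg x) hx 2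
  have htail : x ^ 2 / 2 * ∑' k : ℤ, f (ε * k) * (k : ℝ) ^ 2 ≤ c₀ / (2 * ε) := by
    calc x ^ 2 / 2 * ∑' k : ℤ, f (ε * k) * (k : ℝ) ^ 2
        ≤ δ ^ 2 * ε ^ 2 / 2 * (4 * (C / ε ^ 2) / ε) := by
          gcongr
          exact tsum_nonneg fun k => mul_nonneg (hf0 _) (sq_nonneg _)
      _ = 4 * C * δ ^ 2 / (2 * ε) := by field_simp
      _ ≤ c₀ / (2 * ε) := by gcongr
  have : c₀ / ε - c₀ / (2 * ε) = c₀ / (2 * ε) := by field_simp; ring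
  linarith

end Sampled

lemma integrable_one_add_sq_rpow_neg {p : ℝ} (hp : 1 / 2 < p) :
    Integrable fun u : ℝ => (1 + u ^ 2) ^ (-p) := by
  have := integrable_rpow_neg_one_add_norm_sq (E := ℝ) (μ := volume) (r := 2 * p)
    (by rw [Module.finrank_self, Nat.cast_one]; linarith)
  rw [show -(2 * p) / 2 = -p by ring] at this
  simpa only [Real.norm_eq_abs, sq_abs] using this

lemma setIntegral_Ioc_rpow_le {g : ℝ → ℝ} {A ε p : ℝ} (hε : 0 < ε) (hp : 1 / 2 < p)
    (hA : 0 ≤ A) (hg0 : ∀ x, 0 ≤ g x) (hg : ∀ x ∈ Ioc (-π) π, g x * (ε ^ 2 + x ^ 2) ≤ A * ε) :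
    ∫ x in Ioc (-π) π, g x ^ p ≤ A ^ p * (∫ u : ℝ, (1 + u ^ 2) ^ (-p)) * ε ^ (1 - p) := by
  set h : ℝ → ℝ := fun u => (1 + u ^ 2) ^ (-p)
  have hmaj : Integrable fun x => (A / ε) ^ p * h (x / ε) :=
    ((integrable_one_add_sq_rpow_neg hp).comp_div hε.ne').const_mul _
  have hpt : ∀ x ∈ Ioc (-π) π, g x ^ p ≤ (A / ε) ^ p * h (x / ε) := by
    intro x hx
    have hpos : 0 < 1 + (x / ε) ^ 2 := by positivity
    have hgx : g x ≤ A / ε * (1 + (x / ε) ^ 2)⁻¹ := by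
      rw [show A / ε * (1 + (x / ε) ^ 2)⁻¹ = A * ε / (ε ^ 2 + x ^ 2) by field_simp,
        le_div_iff₀ (by positivity)]
      exact hg x hx
    calc g x ^ p ≤ (A / ε * (1 + (x / ε) ^ 2)⁻¹) ^ p := by gcongr; exact hg0 x
      _ = (A / ε) ^ p * h (x / ε) := by
        rw [mul_rpow (by positivity) (by positivity), inv_rpow hpos.le, ← rpow_neg hpos.le]
  calc ∫ x in Ioc (-π) π, g x ^ p ≤ ∫ x in Ioc (-π) π, (A / ε) ^ p * h (x / ε) :=
        integral_mono_of_nonneg (.of_forall fun x => rpow_nonneg (hg0 x) p) hmaj.integrableOn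
          ((ae_restrict_iff' measurableSet_Ioc).2 (.of_forall hpt))
    _ ≤ ∫ x, (A / ε) ^ p * h (x / ε) :=
        setIntegral_le_integral hmaj (.of_forall fun x => by positivity)
    _ = A ^ p * (∫ u, h u) * ε ^ (1 - p) := by
        rw [integral_const_mul, Measure.integral_comp_div, abs_of_pos hε, smul_eq_mul,
          div_rpow hA hε.le, rpow_sub hε, rpow_one]
        field_simp

lemma le_setIntegral_Ioc_rpow {g : ℝ → ℝ} {b d p : ℝ} (hg : Continuous g) (hg0 : ∀ x, 0 ≤ g x)
    (hp : 0 ≤ p) (hd : 0 ≤ d) (hdπ : d ≤ π) (hb : 0 ≤ b) (hgb : ∀ x ∈ Ioc (-d) d, b ≤ g x) :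
    2 * d * b ^ p ≤ ∫ x in Ioc (-π) π, g x ^ p := by
  have hint : IntegrableOn (fun x => g x ^ p) (Ioc (-π) π) :=
    (hg.rpow_const fun _ => Or.inr hp).integrableOn_Icc.mono_set Ioc_subset_Icc_self
  calc 2 * d * b ^ p = b ^ p * volume.real (Ioc (-d) d) := by
        rw [Real.volume_real_Ioc_of_le (by linarith)]; ring
    _ ≤ ∫ x in Ioc (-d) d, g x ^ p :=
        setIntegral_ge_of_const_le_real measurableSet_Ioc measure_Ioc_lt_top.ne
          (fun x hx => rpow_le_rpow hb (hgb x hx) hp)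
          (hint.mono_set (Ioc_subset_Ioc (by linarith) hdπ))
    _ ≤ ∫ x in Ioc (-π) π, g x ^ p :=
        setIntegral_mono_set hint (.of_forall fun x => rpow_nonneg (hg0 x) p)
          (Ioc_subset_Ioc (by linarith) hdπ).eventuallyLE

lemma integral_one_add_sq_rpow_neg_pos {p : ℝ} (hp : 1 / 2 < p) :
    0 < ∫ u : ℝ, (1 + u ^ 2) ^ (-p) := by
  refine (integral_pos_iff_support_of_nonneg (fun u => by positivity)
    (integrable_one_add_sq_rpow_neg hp)).2 ?_
  rw [Function.support_eq_univ fun u => (by positivity : (1 + u ^ 2 : ℝ) ^ (-p) ≠ 0)]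
  simp

theorem exists_setIntegral_norm_trigSeries_comp_mul_rpow_bounds {f f' f'' : ℝ → ℝ} {C c₀ p : ℝ}
    (hf0 : ∀ t, 0 ≤ f t) (hf : ∀ t, |f t| ≤ C * rexp (-|t|))
    (hf2 : ∀ t, |t ^ 2 * f t| ≤ C * rexp (-|t|)) (hf' : ∀ t, HasDerivAt f (f' t) t)
    (hf'' : ∀ t, HasDerivAt f' (f'' t) t) (hf''C : ∀ t, |f'' t| ≤ C * rexp (-|t|))
    (hc₀ : 0 < c₀) (hlow : ∀ t ∈ Icc 1 3, c₀ ≤ f t) (hp : 1 ≤ p) :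
    ∃ c C' : ℝ, 0 < c ∧ 0 < C' ∧ ∀ ε ∈ Ioc (0 : ℝ) 1,
      c * ε ^ (1 - p) ≤ ∫ x in Ioc (-π) π, ‖trigSeries (fun k => f (ε * k)) x‖ ^ p ∧
      ∫ x in Ioc (-π) π, ‖trigSeries (fun k => f (ε * k)) x‖ ^ p ≤ C' * ε ^ (1 - p) := by
  have hC : 0 < C := by
    have := (le_abs_self _).trans (hf 1)
    have := hlow 1 ⟨le_rfl, by norm_num⟩
    nlinarith [exp_pos (-|(1 : ℝ)|)]
  set A := (4 + 2 * π ^ 2 * rexp 1) * C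
  -- for `|x| ≤ δε` the `cos` defect `x²/2 ∑ aₖ k² ≤ 2Cδ²/ε` is at most half of `∑ aₖ ≥ c₀/ε`
  set δ := min 1 (c₀ / (4 * C))
  have hδ0 : 0 < δ := by positivity
  have hδ : 4 * C * δ ^ 2 ≤ c₀ := by
    calc 4 * C * δ ^ 2 ≤ 4 * C * (1 * (c₀ / (4 * C))) := by
          rw [sq]; gcongr; exacts [min_le_left _ _, min_le_right _ _]
      _ = c₀ := by field_simp
  refine ⟨2 * δ * (c₀ / 2) ^ p, A ^ p * ∫ u : ℝ, (1 + u ^ 2) ^ (-p), by positivity,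
    mul_pos (by positivity) (integral_one_add_sq_rpow_neg_pos (by linarith)), ?_⟩
  rintro ε ⟨hε, hε1⟩
  constructor
  · have hcont : Continuous fun x => ‖trigSeries (fun k => f (ε * k)) x‖ :=
      (continuous_trigSeries (summable_abs_of_abs_le_exp hε (abs_comp_mul_le_exp hε hf))).norm
    have hδε : δ * ε ≤ π :=
      (mul_le_one₀ (min_le_left _ _) hε.le hε1).trans (by linarith [pi_gt_three])
    calc 2 * δ * (c₀ / 2) ^ p * ε ^ (1 - p) = 2 * (δ * ε) * (c₀ / (2 * ε)) ^ p := by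
          rw [div_mul_eq_div_div, div_rpow (by positivity) hε.le, rpow_sub hε, rpow_one]
          field_simp
      _ ≤ _ := le_setIntegral_Ioc_rpow hcont (fun _ => norm_nonneg _) (by linarith)
          (by positivity) hδε (by positivity) fun x hx =>
            le_norm_trigSeries_comp_mul hf0 hf hf2 hc₀.le hlow hδ hε hε1
              (abs_le.2 ⟨hx.1.le, hx.2⟩)
  · refine (setIntegral_Ioc_rpow_le (A := A) hε (by linarith) (by positivity)
      (fun _ => norm_nonneg _) fun x hx => ?_).trans_eq (by ring)
    exact norm_trigSeries_comp_mul_mul_le hf hf' hf'' hf''C hε hε1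
      (abs_le.2 ⟨hx.1.le, hx.2⟩)

theorem exists_setIntegral_norm_trigSeries_wgt_rpow_bounds (s : ℕ) {p : ℝ} (hp : 1 ≤ p) :
    ∃ c C : ℝ, 0 < c ∧ 0 < C ∧ ∀ ε ∈ Ioc (0 : ℝ) 1,
      c * ε ^ (1 - p) ≤ ∫ x in Ioc (-π) π, ‖trigSeries (fun k => wgt s ((ε * k) ^ 2)) x‖ ^ p ∧
      ∫ x in Ioc (-π) π, ‖trigSeries (fun k => wgt s ((ε * k) ^ 2)) x‖ ^ p ≤ C * ε ^ (1 - p) := by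
  let D : ℝ[X] → ℝ[X] := fun P => derivative P - 2 * X * P
  have hwgt (t : ℝ) : wgt s (t ^ 2) = (X ^ (2 * s) : ℝ[X]).eval t * rexp (-t ^ 2) := by
    simp only [wgt, eval_pow, eval_X, pow_mul]
  have hwgt2 (t : ℝ) :
      t ^ 2 * wgt s (t ^ 2) = (X ^ (2 * s + 2) : ℝ[X]).eval t * rexp (-t ^ 2) := by
    simp only [wgt, eval_pow, eval_X]; ring
  obtain ⟨C, h₀, h₂, h''⟩ := ((eventually_abs_eval_mul_exp_neg_sq_le (X ^ (2 * s))).and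
    ((eventually_abs_eval_mul_exp_neg_sq_le (X ^ (2 * s + 2))).and
      (eventually_abs_eval_mul_exp_neg_sq_le (D (D (X ^ (2 * s))))))).exists
  refine exists_setIntegral_norm_trigSeries_comp_mul_rpow_bounds (f := fun t => wgt s (t ^ 2))
    (fun t => by unfold wgt; positivity) (fun t => by rw [hwgt]; exact h₀ t)
    (fun t => by rw [hwgt2]; exact h₂ t)
    (fun t => by rw [funext hwgt]; exact hasDerivAt_eval_mul_exp_neg_sq _ t)
    (fun t => hasDerivAt_eval_mul_exp_neg_sq _ t) h'' (exp_pos (-9)) ?_ hp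
  rintro t ⟨ht₁, ht₃⟩
  calc rexp (-9) = 1 * rexp (-9) := (one_mul _).symm
    _ ≤ (t ^ 2) ^ s * rexp (-t ^ 2) := by
      gcongr
      · exact one_le_pow₀ (by nlinarith)
      · nlinarith

lemma integral_rho_eq {E : Type*} [NormedAddCommGroup E] [NormedSpace ℝ E] (f : S1 → E) :
    ∫ θ, f θ ∂rho = (2 * π)⁻¹ • ∫ x in Ioc (-π) π, f x := by
  have h := AddCircle.integral_preimage (2 * π) (-π) f
  rw [show -π + 2 * π = π by ring] at h
  rw [h, AddCircle.volume_eq_smul_haarAddCircle, integral_smul_measure,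
    ENNReal.toReal_ofReal (by positivity), smul_smul, inv_mul_cancel₀ (by positivity), one_smul,
    rho]

lemma needlet_coe_add (B : ℝ) (s : ℕ) (j : ℤ) (lam : ℝ) (xc : S1) (x : ℝ) :
    needlet B s j lam xc (x + xc) =
      Real.sqrt lam * trigSeries (fun k => wgt s ((B ^ (-j) * k) ^ 2)) x := by
  rw [needlet, add_sub_cancel_right, trigSeries]
  congr 1
  refine tsum_congr fun k => ?_
  rw [fourier_coe_apply]
  congr 2
  push_cast
  field_simp

lemma integral_rho_norm_needlet_rpow (B : ℝ) (s : ℕ) (j : ℤ) {lam : ℝ} (hlam : 0 ≤ lam)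
    (xc : S1) (p : ℝ) :
    ∫ θ, ‖needlet B s j lam xc θ‖ ^ p ∂rho = (2 * π)⁻¹ * (lam ^ (p / 2) *
      ∫ x in Ioc (-π) π, ‖trigSeries (fun k => wgt s ((B ^ (-j) * k) ^ 2)) x‖ ^ p) := by
  calc ∫ θ, ‖needlet B s j lam xc θ‖ ^ p ∂rho
      = ∫ θ, ‖needlet B s j lam xc (θ + xc)‖ ^ p ∂rho :=
        (integral_add_right_eq_self (μ := AddCircle.haarAddCircle) _ xc).symm
    _ = _ := by
      rw [integral_rho_eq, smul_eq_mul, ← integral_const_mul (lam ^ (p / 2))]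
      congr 2 with x
      rw [needlet_coe_add, norm_mul, Complex.norm_real, Real.norm_of_nonneg (sqrt_nonneg _),
        mul_rpow (sqrt_nonneg _) (norm_nonneg _), sqrt_eq_rpow, ← rpow_mul hlam]
      ring_nf

lemma mul_zpow_neg_rpow_half_mul_rpow {B κ η : ℝ} (hB : 0 < B) (hκ : 0 ≤ κ) (hη : 0 ≤ η)
    (j : ℤ) (p : ℝ) :
    (κ * η * B ^ (-j)) ^ (p / 2) * (B ^ (-j)) ^ (1 - p) =
      κ ^ (p / 2) * η ^ (p / 2) * B ^ ((j : ℝ) * (p / 2 - 1)) := by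
  rw [mul_rpow (by positivity) (by positivity), mul_rpow hκ hη, mul_assoc,
    ← rpow_add (by positivity), ← rpow_intCast, ← rpow_mul hB.le]
  push_cast
  ring_nf

theorem needlet_Lp_norm_bounds (s : ℕ) (B η c₁ C₁ : ℝ)
    (hB : 1 < B) (hη : 0 < η) (hc₁ : 0 < c₁) (hC₁ : 0 < C₁)
    (Q : ℤ → ℕ) (lam : ℤ → ℕ → ℝ) (xc : ℤ → ℕ → S1)
    (hlam : ∀ j : ℤ, 0 ≤ j → ∀ q < Q j,
      c₁ * η * B ^ (-j) ≤ lam j q ∧ lam j q ≤ C₁ * η * B ^ (-j)) :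
    ∀ p : ℝ, 1 ≤ p → ∃ ctil Ctil : ℝ, 0 < ctil ∧ 0 < Ctil ∧
      ∀ j : ℤ, 0 ≤ j → ∀ q < Q j,
        ctil * B ^ ((j : ℝ) * (p / 2 - 1)) * η ^ (p / 2) ≤
            (∫ θ, ‖needlet B s j (lam j q) (xc j q) θ‖ ^ p ∂rho) ∧
          (∫ θ, ‖needlet B s j (lam j q) (xc j q) θ‖ ^ p ∂rho) ≤
            Ctil * η ^ (p / 2) * B ^ ((j : ℝ) * (p / 2 - 1)) := by
  intro p hp
  obtain ⟨c, C, hc, hC, hK⟩ := exists_setIntegral_norm_trigSeries_wgt_rpow_bounds s hp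
  refine ⟨(2 * π)⁻¹ * c₁ ^ (p / 2) * c, (2 * π)⁻¹ * C₁ ^ (p / 2) * C, by positivity,
    by positivity, fun j hj q hq => ?_⟩
  have hB0 : 0 < B := by linarith
  have hε : B ^ (-j) ∈ Ioc (0 : ℝ) 1 :=
    ⟨zpow_pos hB0 _, zpow_le_one_of_nonpos₀ hB.le (by linarith)⟩
  obtain ⟨hlam₁, hlam₂⟩ := hlam j hj q hq
  obtain ⟨hK₁, hK₂⟩ := hK _ hε
  have hlam0 : 0 ≤ lam j q := (by positivity : 0 ≤ c₁ * η * B ^ (-j)).trans hlam₁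
  rw [integral_rho_norm_needlet_rpow _ _ _ hlam0]
  constructor
  · calc (2 * π)⁻¹ * c₁ ^ (p / 2) * c * B ^ ((j : ℝ) * (p / 2 - 1)) * η ^ (p / 2)
        = (2 * π)⁻¹ * ((c₁ * η * B ^ (-j)) ^ (p / 2) * (c * (B ^ (-j)) ^ (1 - p))) := by
          linear_combination (-(2 * π)⁻¹ * c) * mul_zpow_neg_rpow_half_mul_rpow hB0 hc₁.le hη.le j p
      _ ≤ _ := by gcongr
  · calc (2 * π)⁻¹ * ((lam j q) ^ (p / 2) * _)
        ≤ (2 * π)⁻¹ * ((C₁ * η * B ^ (-j)) ^ (p / 2) * (C * (B ^ (-j)) ^ (1 - p))) := by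
          gcongr
      _ = _ := by
          linear_combination ((2 * π)⁻¹ * C) * mul_zpow_neg_rpow_half_mul_rpow hB0 hC₁.le hη.le j p
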